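/- The iterated Jackson q-integral admits the Al-Salam representation: (V_q^n f)(z) = ((1-q)^{n-1}/(q;q)_{n-1}) ∫_0^z z^{n-1} (qt/z; q)_{n-1} f(t) d_q t for n ≥ 1 and f, e.g., a polynomial. -/

import Mathlib

open Finset

noncomputable def jackson (q : ℂ) (f : ℂ → ℂ) (z : ℂ) : ℂ :=
  z * (1 - q) * ∑' k : ℕ, f (z * q ^ k) * q ^ k

/-- q-Pochhammer symbol `(a;q)_m`. -/
noncomputable def qPoch (a q : ℂ) (m : ℕ) : ℂ :=
  ∏ j ∈ Finset.range m, (1 - a * q ^ j)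

/-- The Jackson q-integration operator `V_q f(z) = ∫_0^z f(t) d_q t`. -/
noncomputable def Vq (q : ℂ) (f : ℂ → ℂ) : ℂ → ℂ := fun z => jackson q f z

/-!
Both sides are linear in `f`, so it suffices to compare them on monomials `t ^ k`. Iterating
`∫_0^z t^e d_q t = (1 - q) / (1 - q^(e+1)) z^(e+1)` gives
`V_q^n (t^k) = (1 - q)^n / (q^(k+1); q)_n z^(k+n)`. On the right-hand side, the substitution
`t = z q^s` turns the kernel into `(q^(s+1); q)_{n-1}`, and the identity
`∑_s (q^(s+1); q)_m x^s = (q; q)_m / (x; q)_(m+1)` (a form of the q-binomial theorem, proved by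
induction on `m` through `x ↦ q x`) evaluates the resulting series at `x = q^(k+1)`.
-/

theorem one_sub_ne_zero_of_norm_lt_one {R : Type*} [NormedRing R] [NormOneClass R] {x : R}
    (hx : ‖x‖ < 1) : 1 - x ≠ 0 :=
  sub_ne_zero.mpr fun h => by simp [← h] at hx

theorem norm_pow_succ_lt_one {q : ℂ} (hq : ‖q‖ < 1) (e : ℕ) : ‖q ^ (e + 1)‖ < 1 := by
  rw [norm_pow]; exact pow_lt_one₀ (norm_nonneg q) hq (Nat.succ_ne_zero e)

section QPochhammer

variable {a q x : ℂ}

theorem qPoch_succ (a q : ℂ) (m : ℕ) : qPoch a q (m + 1) = qPoch a q m * (1 - a * q ^ m) :=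
  prod_range_succ _ _

theorem qPoch_succ' (a q : ℂ) (m : ℕ) : qPoch a q (m + 1) = (1 - a) * qPoch (q * a) q m := by
  rw [qPoch, qPoch, prod_range_succ', mul_comm, pow_zero, mul_one]
  exact congrArg _ (prod_congr rfl fun j _ => by ring)

theorem qPoch_ne_zero (ha : ‖a‖ < 1) (hq : ‖q‖ ≤ 1) (m : ℕ) : qPoch a q m ≠ 0 := by
  refine prod_ne_zero_iff.mpr fun j _ => sub_ne_zero.mpr fun h => ?_
  have : ‖a * q ^ j‖ < 1 := by
    rw [norm_mul, norm_pow]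
    exact mul_lt_one_of_nonneg_of_lt_one_left (norm_nonneg a) ha (pow_le_one₀ (norm_nonneg q) hq)
  simp [← h] at this

theorem norm_qPoch_le (ha : ‖a‖ ≤ 1) (hq : ‖q‖ ≤ 1) (m : ℕ) : ‖qPoch a q m‖ ≤ 2 ^ m := by
  rw [qPoch, norm_prod]
  refine (prod_le_prod (fun j _ => norm_nonneg (1 - a * q ^ j)) fun j _ => ?_).trans_eq
    (by rw [prod_const, card_range])
  calc ‖1 - a * q ^ j‖ ≤ ‖(1 : ℂ)‖ + ‖a‖ * ‖q‖ ^ j :=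
        (norm_sub_le (1 : ℂ) (a * q ^ j)).trans_eq (by rw [norm_mul, norm_pow])
    _ ≤ 1 + 1 * 1 := by
        rw [norm_one]; gcongr; exact pow_le_one₀ (norm_nonneg q) hq
    _ = 2 := by norm_num

theorem summable_qPoch_pow_mul_geometric (hq : ‖q‖ ≤ 1) (hx : ‖x‖ < 1) (m : ℕ) :
    Summable fun s : ℕ => qPoch (q ^ (s + 1)) q m * x ^ s := by
  refine Summable.of_norm_bounded
    ((summable_geometric_of_lt_one (norm_nonneg x) hx).mul_left (2 ^ m)) fun s => ?_
  rw [norm_mul, norm_pow]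
  have hqs : ‖q ^ (s + 1)‖ ≤ 1 := by rw [norm_pow]; exact pow_le_one₀ (norm_nonneg q) hq
  gcongr
  exact norm_qPoch_le hqs hq m

theorem tsum_qPoch_pow_mul_geometric_mul_qPoch (hq : ‖q‖ < 1) (hx : ‖x‖ < 1) (m : ℕ) :
    (∑' s : ℕ, qPoch (q ^ (s + 1)) q m * x ^ s) * qPoch x q (m + 1) = qPoch q q m := by
  induction m generalizing x with
  | zero =>
    simp only [qPoch, zero_add, range_zero, prod_empty, one_mul, prod_range_one, pow_zero, mul_one]
    rw [tsum_geometric_of_norm_lt_one hx]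
    exact inv_mul_cancel₀ (one_sub_ne_zero_of_norm_lt_one hx)
  | succ m ih =>
    have hqx : ‖q * x‖ < 1 := by
      rw [norm_mul]; exact mul_lt_one_of_nonneg_of_lt_one_left (norm_nonneg q) hq hx.le
    have hterm : ∀ s : ℕ, qPoch (q ^ (s + 1)) q (m + 1) * x ^ s = qPoch (q ^ (s + 1)) q m * x ^ s
        - q ^ (m + 1) * (qPoch (q ^ (s + 1)) q m * (q * x) ^ s) := fun s => by
      rw [qPoch_succ]; ring
    rw [tsum_congr hterm, (summable_qPoch_pow_mul_geometric hq.le hx m).tsum_sub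
      ((summable_qPoch_pow_mul_geometric hq.le hqx m).mul_left _), tsum_mul_left]
    linear_combination (1 - x * q ^ (m + 1)) * ih hx - q ^ (m + 1) * (1 - x) * ih hqx
      + (∑' s : ℕ, qPoch (q ^ (s + 1)) q m * x ^ s) * qPoch_succ x q (m + 1)
      - q ^ (m + 1) * (∑' s : ℕ, qPoch (q ^ (s + 1)) q m * (q * x) ^ s) * qPoch_succ' x q (m + 1)
      - qPoch_succ q q m

theorem hasSum_qPoch_pow_mul_geometric (hq : ‖q‖ < 1) (hx : ‖x‖ < 1) (m : ℕ) :
    HasSum (fun s : ℕ => qPoch (q ^ (s + 1)) q m * x ^ s) (qPoch q q m / qPoch x q (m + 1)) := by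
  rw [← eq_div_of_mul_eq (qPoch_ne_zero hx hq.le (m + 1))
    (tsum_qPoch_pow_mul_geometric_mul_qPoch hq hx m)]
  exact (summable_qPoch_pow_mul_geometric hq.le hx m).hasSum

end QPochhammer

section Jackson

variable {q : ℂ}

theorem jackson_eq_of_hasSum {f : ℂ → ℂ} {z S : ℂ}
    (h : HasSum (fun k : ℕ => f (z * q ^ k) * q ^ k) S) : jackson q f z = z * (1 - q) * S := by
  rw [jackson, h.tsum_eq]

theorem hasSum_jackson_monomial (hq : ‖q‖ < 1) (c z : ℂ) (e : ℕ) :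
    HasSum (fun k : ℕ => c * (z * q ^ k) ^ e * q ^ k) (c * z ^ e / (1 - q ^ (e + 1))) := by
  rw [div_eq_mul_inv]
  have hgeom := hasSum_geometric_of_norm_lt_one (norm_pow_succ_lt_one hq e)
  exact (hgeom.mul_left (c * z ^ e)).congr_fun fun k => by ring

theorem jackson_sum_monomials (hq : ‖q‖ < 1) {ι : Type*} (s : Finset ι) (c : ι → ℂ) (e : ι → ℕ)
    (z : ℂ) : jackson q (fun t => ∑ i ∈ s, c i * t ^ e i) z
      = ∑ i ∈ s, c i * ((1 - q) / (1 - q ^ (e i + 1))) * z ^ (e i + 1) := by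
  rw [jackson_eq_of_hasSum (S := ∑ i ∈ s, c i * z ^ e i / (1 - q ^ (e i + 1)))]
  · rw [mul_sum]; exact sum_congr rfl fun i _ => by ring
  · simpa only [sum_mul] using hasSum_sum fun i _ => hasSum_jackson_monomial hq (c i) z (e i)

theorem Vq_iterate_sum_monomials (hq : ‖q‖ < 1) (a : ℕ → ℂ) (N n : ℕ) (z : ℂ) :
    (Vq q)^[n] (fun t => ∑ k ∈ range N, a k * t ^ k) z
      = ∑ k ∈ range N, a k * ((1 - q) ^ n / qPoch (q ^ (k + 1)) q n) * z ^ (k + n) := by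
  induction n generalizing z with
  | zero => simp [qPoch]
  | succ n ih =>
    rw [Function.iterate_succ_apply', funext ih, Vq, jackson_sum_monomials hq]
    refine sum_congr rfl fun k _ => ?_
    have hP := qPoch_ne_zero (norm_pow_succ_lt_one hq k) hq.le n
    have hlast := one_sub_ne_zero_of_norm_lt_one (norm_pow_succ_lt_one hq (k + n))
    rw [qPoch_succ, ← pow_add, show k + 1 + n = k + n + 1 by omega]
    field_simp
    ring

theorem jackson_kernel_mul_sum_monomials (hq : ‖q‖ < 1) {z : ℂ} (hz : z ≠ 0) (a : ℕ → ℂ)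
    (N m : ℕ) :
    jackson q (fun t => z ^ m * qPoch (q * t / z) q m * ∑ j ∈ range N, a j * t ^ j) z
      = z * (1 - q) *
          ∑ j ∈ range N, a j * z ^ (m + j) * (qPoch q q m / qPoch (q ^ (j + 1)) q (m + 1)) := by
  refine jackson_eq_of_hasSum ((hasSum_sum fun j _ =>
    (hasSum_qPoch_pow_mul_geometric hq (norm_pow_succ_lt_one hq j) m).mul_left
      (a j * z ^ (m + j))).congr_fun fun k => ?_)
  have hsubst : q * (z * q ^ k) / z = q ^ (k + 1) := by field_simp; ring
  rw [hsubst, mul_sum, sum_mul]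
  exact sum_congr rfl fun j _ => by ring

end Jackson

/-- Al-Salam representation of the iterated Jackson q-integral:
`(V_q^n f)(z) = ((1-q)^{n-1}/(q;q)_{n-1}) ∫_0^z z^{n-1} (qt/z;q)_{n-1} f(t) d_q t`
for `n ≥ 1` and `f` a polynomial. -/
theorem alsalam (q : ℝ) (hq0 : 0 < q) (hq1 : q < 1) (a : ℕ → ℂ)
    (ha : ∃ N : ℕ, ∀ k, N ≤ k → a k = 0) (f : ℂ → ℂ)
    (hf : ∀ z, f z = ∑' k : ℕ, a k * z ^ k) (n : ℕ) (hn : 1 ≤ n) (z : ℂ) (hz : z ≠ 0) :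
    (Vq (q : ℂ))^[n] f z
      = (1 - (q : ℂ)) ^ (n - 1) / qPoch (q : ℂ) (q : ℂ) (n - 1)
        * jackson (q : ℂ)
            (fun t => z ^ (n - 1) * qPoch ((q : ℂ) * t / z) (q : ℂ) (n - 1) * f t) z := by
  obtain ⟨N, hN⟩ := ha
  have hqn : ‖(q : ℂ)‖ < 1 := by rwa [Complex.norm_real, Real.norm_of_nonneg hq0.le]
  obtain rfl : f = fun t => ∑ k ∈ range N, a k * t ^ k := funext fun t =>
    (hf t).trans (tsum_eq_sum fun k hk => by rw [hN k (by simpa using hk), zero_mul])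
  obtain ⟨m, rfl⟩ : ∃ m, n = m + 1 := ⟨n - 1, by omega⟩
  rw [Nat.add_sub_cancel, Vq_iterate_sum_monomials hqn, jackson_kernel_mul_sum_monomials hqn hz,
    mul_sum, mul_sum]
  refine sum_congr rfl fun k _ => ?_
  have h₁ := qPoch_ne_zero hqn hqn.le m
  have h₂ := qPoch_ne_zero (norm_pow_succ_lt_one hqn k) hqn.le (m + 1)
  field_simp
  ring
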